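/- arXiv:1611.03884 — 5 statements merged into one kernel-verified Lean document; each statement's English description precedes it below -/
import Mathlib

section
/- Let G and H be finite groups and let φ : G → H be a group homomorphism. Suppose that for every finite group Q, the induced map Hom(H, Q)/Q → Hom(G, Q)/Q (where Q acts on homomorphism sets by conjugation) is a bijection. Then φ is an isomorphism. -/
/-- Conjugacy of group homomorphisms: `f ~ g` iff `g = (conj by q) ∘ f` for some `q`. -/
def conjSetoid (A Q : Type) [Group A] [Group Q] : Setoid (A →* Q) where
  r f g := ∃ q : Q, ∀ a : A, g a = q * f a * q⁻¹
  iseqv := by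
    constructor
    · intro f; exact ⟨1, by simp⟩
    · rintro f g ⟨q, hq⟩
      exact ⟨q⁻¹, fun a => by rw [hq a]; group⟩
    · rintro f g h ⟨q, hq⟩ ⟨r, hr⟩
      exact ⟨r * q, fun a => by rw [hr a, hq a]; group⟩

/-- The map `Hom(H,Q)/Q → Hom(G,Q)/Q` induced by precomposition with `φ : G →* H`. -/
def precompMap {G H : Type} [Group G] [Group H] (φ : G →* H) (Q : Type) [Group Q] :
    Quotient (conjSetoid H Q) → Quotient (conjSetoid G Q) :=
  Quotient.map (fun f => f.comp φ) (by
    rintro f g ⟨q, hq⟩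
    exact ⟨q, fun a => hq (φ a)⟩)

/-! Surjectivity of `precompMap φ G` at the class of `id_G` gives a retraction `ψ` of `φ` up to
conjugation, hence a genuine retraction; so `φ` is injective. Then `φ ∘ ψ` and `id_H` agree after
precomposition with `φ`, so injectivity of `precompMap φ H` makes `φ ∘ ψ` an inner automorphism
of `H`, which is surjective; hence so is `φ`. -/

section

variable {G H : Type} [Group G] [Group H]

theorem precompMap_mk (φ : G →* H) (Q : Type) [Group Q] (f : H →* Q) :
    precompMap φ Q ⟦f⟧ = ⟦f.comp φ⟧ :=
  rfl

theorem exists_leftInverse_of_surjective_precompMap {φ : G →* H}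
    (hφ : Function.Surjective (precompMap φ G)) : ∃ ψ : H →* G, ψ.comp φ = MonoidHom.id G := by
  obtain ⟨⟨f⟩, hf⟩ := hφ ⟦MonoidHom.id G⟧
  obtain ⟨q, hq⟩ := Quotient.exact hf
  refine ⟨(MulAut.conj q).toMonoidHom.comp f, MonoidHom.ext fun a => ?_⟩
  simpa using (hq a).symm

theorem surjective_of_injective_precompMap {φ : G →* H}
    (hφ : Function.Injective (precompMap φ H)) {ψ : H →* G} (hψ : ψ.comp φ = MonoidHom.id G) :
    Function.Surjective φ := by
  have hφψ : (φ.comp ψ).comp φ = (MonoidHom.id H).comp φ := by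
    rw [MonoidHom.comp_assoc, hψ, MonoidHom.comp_id, MonoidHom.id_comp]
  obtain ⟨r, hr⟩ := Quotient.exact <| hφ (a₁ := ⟦MonoidHom.id H⟧) (a₂ := ⟦φ.comp ψ⟧) <| by
    rw [precompMap_mk, precompMap_mk, hφψ]
  intro b
  exact ⟨ψ (r⁻¹ * b * r), by simpa [mul_assoc] using hr (r⁻¹ * b * r)⟩

end

/-- If `G`, `H` are finite groups and `φ : G →* H` induces a bijection
`Hom(H,Q)/Q → Hom(G,Q)/Q` for every finite group `Q`, then `φ` is an isomorphism. -/
theorem stmt0 {G H : Type} [Group G] [Finite G] [Group H] [Finite H] (φ : G →* H)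
    (h : ∀ (Q : Type) [Group Q] [Finite Q], Function.Bijective (precompMap φ Q)) :
    Function.Bijective φ := by
  obtain ⟨ψ, hψ⟩ := exists_leftInverse_of_surjective_precompMap (h G).2
  have hleft : Function.LeftInverse ψ φ := fun a => DFunLike.congr_fun hψ a
  exact ⟨hleft.injective, surjective_of_injective_precompMap (h H).1 hψ⟩
end

section
/- Let R be a commutative ring of prime characteristic p that is F-finite, i.e., the Frobenius endomorphism F : R → R, F(r) = r^p, makes R into a finite module over itself via F. If S is an étale R-algebra, then S is F-finite. -/
/-!
Frobenius is always integral (`x` is a root of `T ^ p - x`), so it is finite as soon as it is of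
finite type. Since `frobenius S p ∘ algebraMap R S = algebraMap R S ∘ frobenius R p`, and the right
side is a finite map followed by one of finite type, Frobenius of an `R`-algebra of finite type is
of finite type. Étale algebras are of finite presentation, hence of finite type.
-/

open Polynomial in
theorem frobenius_isIntegral (A : Type*) [CommRing A] (p : ℕ) [ExpChar A p] :
    (frobenius A p).IsIntegral := by
  intro x
  refine ⟨X ^ p - C x, monic_X_pow_sub_C _ (expChar_pos A p).ne', ?_⟩
  simp [frobenius_def]

theorem frobenius_comp_algebraMap (R S : Type*) [CommRing R] [CommRing S] [Algebra R S]
    (p : ℕ) [ExpChar R p] [ExpChar S p] :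
    (frobenius S p).comp (algebraMap R S) = (algebraMap R S).comp (frobenius R p) := by
  ext x
  simp [frobenius_def]

theorem frobenius_finite_of_finiteType {R S : Type*} [CommRing R] [CommRing S] [Algebra R S]
    [Algebra.FiniteType R S] (p : ℕ) [ExpChar R p] [ExpChar S p]
    (hR : (frobenius R p).Finite) : (frobenius S p).Finite := by
  refine (frobenius_isIntegral S p).to_finite
    (RingHom.FiniteType.of_comp_finiteType (f := algebraMap R S) ?_)
  rw [frobenius_comp_algebraMap]
  exact (RingHom.finiteType_algebraMap.2 ‹_›).comp hR.to_finiteType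

/-- If `R` is an `F`-finite commutative ring of prime characteristic `p` (the Frobenius
`r ↦ r^p` is a finite ring map) and `S` is an étale `R`-algebra, then `S` is `F`-finite. -/
theorem stmt8 (p : ℕ) [Fact p.Prime] (R : Type) [CommRing R] [CharP R p]
    (hR : (frobenius R p).Finite)
    (S : Type) [CommRing S] [Algebra R S] [CharP S p] (hS : Algebra.Etale R S) :
    (frobenius S p).Finite := by
  have := hS.finitePresentation
  exact frobenius_finite_of_finiteType p hR
end

section
/- Let R be a commutative ring of prime characteristic p and let S be an étale R-algebra. Then the relative Frobenius map R^{1/p} ⊗_R S → S^{1/p} is an isomorphism, where R^{1/p} and S^{1/p} denote the rings R and S viewed as algebras over themselves via Frobenius. -/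
/-!
The relative Frobenius `φ : R^{1/p} ⊗_R S → S^{1/p}`, `r ⊗ s ↦ r s^p`, satisfies `x^p = 1 ⊗ φ x`,
so its kernel is nil, and its image `S'` contains every `p`-th power. Surjectivity: `S^{1/p}` is
unramified over `S'` and `s^p ∈ S'`, so the diagonal ideal of `S^{1/p} ⊗_{S'} S^{1/p}` is nil and
finitely generated, hence nilpotent; unramifiedness then forces `s ⊗ 1 = 1 ⊗ s`, so the finite
extension `S' → S^{1/p}` is an epimorphism and therefore surjective. Injectivity: the kernel of `φ`
is finitely generated by finite presentation, hence nilpotent, so formal smoothness of `S^{1/p}`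
yields a section of `φ`, which is an inverse of `φ` because `R^{1/p} ⊗_R S` is unramified.
-/

/-- A commuting square of commutative rings is cocartesian (a pushout) if it satisfies the
universal property of the pushout. -/
def IsRingPushout {A B C D : Type} [CommRing A] [CommRing B] [CommRing C] [CommRing D]
    (f : A →+* B) (g : A →+* C) (h : B →+* D) (k : C →+* D) : Prop :=
  h.comp f = k.comp g ∧
    ∀ (E : Type) [CommRing E] (u : B →+* E) (v : C →+* E),
      u.comp f = v.comp g → ∃! w : D →+* E, w.comp h = u ∧ w.comp k = v

open scoped TensorProduct

theorem charP_of_nontrivial_of_algebra (p : ℕ) [Fact p.Prime] (A : Type*) {B : Type*}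
    [CommRing A] [CharP A p] [Ring B] [Algebra A B] [Nontrivial B] : CharP B p :=
  (CharP.charP_iff_prime_eq_zero Fact.out).2 <| by
    rw [← map_natCast (algebraMap A B), CharP.cast_eq_zero, map_zero]

theorem Ideal.isNilpotent_of_le_nilradical_of_fg {R : Type*} [CommSemiring R] {I : Ideal R}
    (hI : I ≤ nilradical R) (hfg : I.FG) : IsNilpotent I :=
  let ⟨n, hn⟩ := Ideal.exists_pow_le_of_le_radical_of_fg hI hfg
  ⟨n, le_bot_iff.mp hn⟩

section PurelyInseparable

variable (p : ℕ) [Fact p.Prime] {A B : Type*} [CommRing A] [CommRing B] [Algebra A B] [CharP B p]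

theorem KaehlerDifferential.isNilpotent_ideal_of_pow_mem_range [Algebra.FiniteType A B]
    (h : ∀ b : B, b ^ p ∈ (algebraMap A B).range) :
    IsNilpotent (KaehlerDifferential.ideal A B) := by
  have : CharP (B ⊗[A] B) p :=
    have := CharP.nontrivial_of_char_ne_one (R := B) (Fact.out : p.Prime).ne_one
    have := (Algebra.TensorProduct.lmul' A : B ⊗[A] B →ₐ[A] B).toRingHom.domain_nontrivial
    charP_of_nontrivial_of_algebra p B
  refine Ideal.isNilpotent_of_le_nilradical_of_fg ?_ (KaehlerDifferential.ideal_fg A B)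
  rw [← KaehlerDifferential.span_range_eq_ideal, Ideal.span_le]
  rintro _ ⟨b, rfl⟩
  obtain ⟨a, ha⟩ := h b
  refine mem_nilradical.2 ⟨p, ?_⟩
  rw [sub_pow_char, Algebra.TensorProduct.tmul_pow, Algebra.TensorProduct.tmul_pow, one_pow, ← ha,
    Algebra.TensorProduct.tmul_one_eq_one_tmul, sub_self]

theorem Algebra.FormallyUnramified.surjective_algebraMap_of_pow_mem_range
    [Algebra.FormallyUnramified A B] [Algebra.FiniteType A B]
    (h : ∀ b : B, b ^ p ∈ (algebraMap A B).range) :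
    Function.Surjective (algebraMap A B) := by
  have : Algebra.IsIntegral A B := ⟨fun b ↦ by
    obtain ⟨a, ha⟩ := h b
    exact .of_pow (Fact.out : p.Prime).pos (ha ▸ isIntegral_algebraMap)⟩
  have : Module.Finite A B := Algebra.IsIntegral.finite
  refine Algebra.isEpi_iff_surjective_algebraMap_of_finite.mp <|
    (Algebra.isEpi_iff_forall_one_tmul_eq A B).mpr fun b ↦ ?_
  have : Algebra.TensorProduct.includeRight = Algebra.TensorProduct.includeLeft :=
    Algebra.FormallyUnramified.ext' (Algebra.TensorProduct.lmul' A).toRingHom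
      (KaehlerDifferential.isNilpotent_ideal_of_pow_mem_range p h) _ _ fun b ↦ by simp
  exact AlgHom.congr_fun this b

end PurelyInseparable

theorem AlgHom.surjective_of_pow_mem_range (p : ℕ) [Fact p.Prime] {R A B : Type*} [CommRing R]
    [CommRing A] [CommRing B] [Algebra R A] [Algebra R B] [CharP B p]
    [Algebra.FormallyUnramified R B] [Algebra.FiniteType R B] (f : A →ₐ[R] B)
    (h : ∀ b : B, b ^ p ∈ f.range) : Function.Surjective f := by
  have : Algebra.FormallyUnramified f.range B := .of_restrictScalars R f.range B
  have : Algebra.FiniteType f.range B := .of_restrictScalars_finiteType R f.range B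
  intro b
  obtain ⟨⟨_, a, rfl⟩, ha⟩ :=
    Algebra.FormallyUnramified.surjective_algebraMap_of_pow_mem_range p
      (A := f.range) (fun b ↦ ⟨⟨b ^ p, h b⟩, rfl⟩) b
  exact ⟨a, ha⟩

theorem AlgHom.injective_of_surjective_of_isNilpotent_ker {R A B : Type*} [CommRing R]
    [CommRing A] [CommRing B] [Algebra R A] [Algebra R B] [Algebra.FormallyUnramified R A]
    [Algebra.FormallySmooth R B] (f : A →ₐ[R] B) (hf : Function.Surjective f)
    (hker : IsNilpotent (RingHom.ker f)) : Function.Injective f := by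
  let σ := Algebra.FormallySmooth.liftOfSurjective (AlgHom.id R B) f hf hker
  have hσ : σ.comp f = AlgHom.id R A :=
    Algebra.FormallyUnramified.lift_unique_of_ringHom (f : A →+* B) hker _ _ <| by
      ext x; exact Algebra.FormallySmooth.liftOfSurjective_apply _ f hf hker (f x)
  exact Function.LeftInverse.injective (g := σ) fun x ↦ AlgHom.congr_fun hσ x

theorem Algebra.IsPushout.isRingPushout {A B C D : Type} [CommRing A] [CommRing B] [CommRing C]
    [CommRing D] [Algebra A B] [Algebra A C] [Algebra B D] [Algebra C D] [Algebra A D]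
    [IsScalarTower A B D] [IsScalarTower A C D] [Algebra.IsPushout A B C D] :
    IsRingPushout (algebraMap A B) (algebraMap A C) (algebraMap B D) (algebraMap C D) := by
  refine ⟨by rw [← IsScalarTower.algebraMap_eq, ← IsScalarTower.algebraMap_eq],
    fun E _ u v huv ↦ ?_⟩
  let _ : Algebra A E := (u.comp (algebraMap A B)).toAlgebra
  let u' : B →ₐ[A] E := { u with commutes' := fun _ ↦ rfl }
  let v' : C →ₐ[A] E := { v with commutes' := fun a ↦ (RingHom.congr_fun huv a).symm }
  have hcomm (b : B) (c : C) : u' b * v' c = v' c * u' b := mul_comm _ _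
  let w := Algebra.pushoutDesc D u' v' hcomm
  have hwu (b : B) : w (algebraMap B D b) = u b := Algebra.pushoutDesc_left D u' v' hcomm b
  have hwv (c : C) : w (algebraMap C D c) = v c := Algebra.pushoutDesc_right D u' v' hcomm c
  refine ⟨w, ⟨RingHom.ext hwu, RingHom.ext hwv⟩, ?_⟩
  rintro w' ⟨hu, hv⟩
  let W : D →ₐ[A] E :=
    { w' with
      commutes' a := by
        simp [IsScalarTower.algebraMap_apply A B D, ← hu, RingHom.algebraMap_toAlgebra] }
  have hW : W = w := Algebra.IsPushout.algHom_ext D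
    (AlgHom.ext fun c ↦ (RingHom.congr_fun hv c).trans (hwv c).symm)
    (AlgHom.ext fun b ↦ (RingHom.congr_fun hu b).trans (hwu b).symm)
  exact congrArg AlgHom.toRingHom hW

/-- `FrobeniusTwist p R` is `R^{1/p}`: a copy of `R`, which is an `R`-algebra through Frobenius. -/
def FrobeniusTwist (_p : ℕ) (R : Type*) : Type _ := R

namespace FrobeniusTwist

variable (p : ℕ) (R S : Type*) [CommRing R] [CommRing S] [Algebra R S]

instance : CommRing (FrobeniusTwist p R) := inferInstanceAs (CommRing R)

def equiv : FrobeniusTwist p R ≃+* R := RingEquiv.refl R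

instance [CharP R p] : CharP (FrobeniusTwist p R) p := inferInstanceAs (CharP R p)

instance [ExpChar R p] : Algebra R (FrobeniusTwist p R) := (frobenius R p).toAlgebra

instance : Algebra (FrobeniusTwist p R) (FrobeniusTwist p S) := inferInstanceAs (Algebra R S)

instance [Algebra.FormallyUnramified R S] :
    Algebra.FormallyUnramified (FrobeniusTwist p R) (FrobeniusTwist p S) :=
  inferInstanceAs (Algebra.FormallyUnramified R S)

instance [Algebra.FiniteType R S] :
    Algebra.FiniteType (FrobeniusTwist p R) (FrobeniusTwist p S) :=
  inferInstanceAs (Algebra.FiniteType R S)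

instance [Algebra.FinitePresentation R S] :
    Algebra.FinitePresentation (FrobeniusTwist p R) (FrobeniusTwist p S) :=
  inferInstanceAs (Algebra.FinitePresentation R S)

instance [Algebra.Etale R S] : Algebra.Etale (FrobeniusTwist p R) (FrobeniusTwist p S) :=
  inferInstanceAs (Algebra.Etale R S)

variable [Fact p.Prime] [CharP R p] [CharP S p]

instance : Algebra R (FrobeniusTwist p S) :=
  ((algebraMap R S).comp (frobenius R p)).toAlgebra

instance : IsScalarTower R (FrobeniusTwist p R) (FrobeniusTwist p S) :=
  .of_algebraMap_eq fun _ ↦ rfl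

instance : IsScalarTower R S (FrobeniusTwist p S) :=
  .of_algebraMap_eq fun r ↦ (algebraMap R S).map_frobenius p r

theorem algebraMap_apply (s : S) :
    algebraMap S (FrobeniusTwist p S) s = (equiv p S).symm (s ^ p) :=
  rfl

noncomputable def relativeFrobenius :
    FrobeniusTwist p R ⊗[R] S →ₐ[FrobeniusTwist p R] FrobeniusTwist p S :=
  Algebra.TensorProduct.lift (Algebra.ofId _ _) (IsScalarTower.toAlgHom R S _)
    fun _ _ ↦ .all _ _

instance : CharP (FrobeniusTwist p R ⊗[R] S) p :=
  have := CharP.nontrivial_of_char_ne_one (R := FrobeniusTwist p S) (Fact.out : p.Prime).ne_one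
  have := (relativeFrobenius p R S).toRingHom.domain_nontrivial
  charP_of_nontrivial_of_algebra p (FrobeniusTwist p R)

@[simp]
theorem relativeFrobenius_tmul (r : FrobeniusTwist p R) (s : S) :
    relativeFrobenius p R S (r ⊗ₜ s) =
      algebraMap (FrobeniusTwist p R) (FrobeniusTwist p S) r * algebraMap S _ s :=
  rfl

theorem pow_char_eq_one_tmul_relativeFrobenius (x : FrobeniusTwist p R ⊗[R] S) :
    x ^ p = (1 : FrobeniusTwist p R) ⊗ₜ equiv p S (relativeFrobenius p R S x) := by
  induction x using TensorProduct.induction_on with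
  | zero => simpa using zero_pow (Fact.out : p.Prime).ne_zero
  | tmul r s =>
    calc (r ⊗ₜ[R] s) ^ p = algebraMap R (FrobeniusTwist p R) (equiv p R r) ⊗ₜ (s ^ p) :=
          Algebra.TensorProduct.tmul_pow r s p
      _ = 1 ⊗ₜ (algebraMap R S (equiv p R r) * s ^ p) := by
          rw [Algebra.algebraMap_eq_smul_one, TensorProduct.smul_tmul, Algebra.smul_def]
  | add x y hx hy => rw [add_pow_char, hx, hy, map_add, map_add, TensorProduct.tmul_add]

theorem relativeFrobenius_surjective [Algebra.FormallyUnramified R S] [Algebra.FiniteType R S] :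
    Function.Surjective (relativeFrobenius p R S) :=
  (relativeFrobenius p R S).surjective_of_pow_mem_range p fun s ↦
    ⟨1 ⊗ₜ equiv p S s, by simp [algebraMap_apply]⟩

theorem isNilpotent_ker_relativeFrobenius [Algebra.FormallyUnramified R S]
    [Algebra.FinitePresentation R S] :
    IsNilpotent (RingHom.ker (relativeFrobenius p R S)) := by
  refine Ideal.isNilpotent_of_le_nilradical_of_fg (fun x hx ↦ mem_nilradical.2 ⟨p, ?_⟩) ?_
  · rw [pow_char_eq_one_tmul_relativeFrobenius, (RingHom.mem_ker).1 hx, map_zero,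
      TensorProduct.tmul_zero]
  · exact Algebra.FinitePresentation.ker_fG_of_surjective _ (relativeFrobenius_surjective p R S)

theorem relativeFrobenius_bijective [Algebra.Etale R S] :
    Function.Bijective (relativeFrobenius p R S) :=
  ⟨(relativeFrobenius p R S).injective_of_surjective_of_isNilpotent_ker
    (relativeFrobenius_surjective p R S) (isNilpotent_ker_relativeFrobenius p R S),
    relativeFrobenius_surjective p R S⟩

instance isPushout [Algebra.Etale R S] :
    Algebra.IsPushout R (FrobeniusTwist p R) S (FrobeniusTwist p S) :=
  ⟨.of_equiv (.ofBijective (relativeFrobenius p R S).toLinearMap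
    (relativeFrobenius_bijective p R S)) fun s ↦
    (relativeFrobenius_tmul p R S 1 s).trans (by rw [map_one, one_mul]; rfl)⟩

end FrobeniusTwist

/-- For an étale algebra `S` over a ring `R` of characteristic `p`, the square formed by
the Frobenii of `R` and `S` and the structure map `R → S` is cocartesian; equivalently the
relative Frobenius `R^{1/p} ⊗_R S → S^{1/p}` is an isomorphism. -/
theorem stmt9 (p : ℕ) [Fact p.Prime] (R : Type) [CommRing R] [CharP R p]
    (S : Type) [CommRing S] [Algebra R S] [CharP S p] (hS : Algebra.Etale R S) :
    IsRingPushout (frobenius R p) (algebraMap R S) (algebraMap R S) (frobenius S p) :=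
  (FrobeniusTwist.isPushout p R S).isRingPushout
end

section
/- Let R → R' be a faithfully flat ring map, and let R → S be a ring map of finite presentation. If S ⊗_R R' is étale over R', then S is étale over R. -/
theorem stmt11_general (R R' S : Type) [CommRing R] [CommRing R'] [CommRing S]
    [Algebra R R'] [Algebra R S] [Module.FaithfullyFlat R R']
    (hEt : Algebra.Etale R' (TensorProduct R R' S)) :
    Algebra.Etale R S :=
  Algebra.Etale.of_etale_tensorProduct_of_faithfullyFlat R'

/-- Faithfully flat descent of étaleness: if `R → R'` is faithfully flat, `R → S` is of
finite presentation, and `R' ⊗_R S` is étale over `R'`, then `S` is étale over `R`. -/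
theorem stmt11 (R R' S : Type) [CommRing R] [CommRing R'] [CommRing S]
    [Algebra R R'] [Algebra R S] [Module.FaithfullyFlat R R']
    (hfp : Algebra.FinitePresentation R S)
    (hEt : Algebra.Etale R' (TensorProduct R R' S)) :
    Algebra.Etale R S :=
  stmt11_general R R' S hEt
end

section
/- Let X be an integral normal Noetherian scheme and let U ⊆ X be an open subscheme whose complement has codimension at least 2 in X. Then restriction induces an isomorphism Γ(X, O_X) → Γ(U, O_U). -/
open AlgebraicGeometry CategoryTheory Opposite
open TopologicalSpace IsLocalRing

theorem aux_prime_eq {R : Type*} [CommRing R] [IsLocalRing R] [IsDomain R] [IsNoetherianRing R]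
    (w : R) (hw : maximalIdeal R = Ideal.span {w}) (p : Ideal R) (hp : p.IsPrime) :
    p = ⊥ ∨ p = maximalIdeal R := by
  rcases eq_or_ne p ⊥ with h | h
  · exact Or.inl h
  right
  obtain ⟨y, hyp, hy0⟩ := Submodule.exists_mem_ne_zero_of_ne_bot h
  have hple : p ≤ maximalIdeal R := le_maximalIdeal hp.ne_top
  have hmne : maximalIdeal R ≠ ⊤ := Ideal.IsMaximal.ne_top inferInstance
  have hbot : (⨅ n : ℕ, maximalIdeal R ^ n) = ⊥ := Ideal.iInf_pow_eq_bot_of_isLocalRing _ hmne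
  have hex : ∃ n : ℕ, y ∉ maximalIdeal R ^ n := by
    by_contra hall
    push_neg at hall
    exact hy0 (by simpa [hbot] using Ideal.mem_iInf.mpr hall : y ∈ (⊥ : Ideal R))
  classical
  set n := Nat.find hex with hn
  have hnpos : n ≠ 0 := by
    intro h0
    exact Nat.find_spec hex (by rw [← hn, h0]; simp)
  have hyn : y ∈ maximalIdeal R ^ (n - 1) := by
    by_contra hc
    exact absurd (Nat.find_min' hex hc) (by omega)
  have hynot : y ∉ maximalIdeal R ^ n := Nat.find_spec hex
  rw [hw, Ideal.span_singleton_pow, Ideal.mem_span_singleton'] at hyn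
  obtain ⟨c, hc⟩ := hyn
  have hcu : IsUnit c := by
    by_contra hcu
    apply hynot
    rw [hw, Ideal.span_singleton_pow, Ideal.mem_span_singleton]
    have hcm : c ∈ Ideal.span {w} := by rw [← hw]; exact hcu
    rw [Ideal.mem_span_singleton] at hcm
    obtain ⟨d, rfl⟩ := hcm
    refine ⟨d, ?_⟩
    rw [← hc]
    have : w ^ n = w * w ^ (n - 1) := by
      conv_lhs => rw [show n = (n-1) + 1 by omega]
      rw [pow_succ]; ring
    rw [this]; ring
  -- y = c * w^(n-1) ∈ p, c unit
  have hwp : w ^ (n - 1) ∈ p := by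
    rcases (hp.mem_or_mem (by rw [hc]; exact hyp) : c ∈ p ∨ w ^ (n-1) ∈ p) with h1 | h1
    · exact absurd (p.eq_top_of_isUnit_mem h1 hcu) hp.ne_top
    · exact h1
  have hn1 : n - 1 ≠ 0 := by
    intro h0
    rw [h0, pow_zero] at hwp
    exact hp.ne_top (p.eq_top_of_isUnit_mem hwp isUnit_one)
  have hwp' : w ∈ p := hp.mem_of_pow_mem _ hwp
  refine le_antisymm hple ?_
  rw [hw, Ideal.span_le, Set.singleton_subset_iff]
  exact hwp'

theorem aux_dim_le_one {R : Type*} [CommRing R] [IsLocalRing R] [IsDomain R] [IsNoetherianRing R]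
    (h : (maximalIdeal R).IsPrincipal) : ringKrullDim R ≤ 1 := by
  obtain ⟨w, hw⟩ := h
  refine iSup_le fun p => ?_
  have hlen : p.length ≤ 1 := by
    by_contra hlen
    push_neg at hlen
    have h0 : p.toFun ⟨0, by omega⟩ < p.toFun ⟨1, by omega⟩ := p.strictMono (Fin.mk_lt_mk.mpr (by omega))
    have h1 : p.toFun ⟨1, by omega⟩ < p.toFun ⟨2, by omega⟩ := p.strictMono (Fin.mk_lt_mk.mpr (by omega))
    rcases aux_prime_eq w hw (p.toFun ⟨1, by omega⟩).asIdeal (p.toFun ⟨1, by omega⟩).isPrime with hb | hm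
    · exact absurd (show (p.toFun ⟨0, by omega⟩).asIdeal < (p.toFun ⟨1, by omega⟩).asIdeal from h0) (by simp [hb])
    · have h2 : (p.toFun ⟨2, by omega⟩).asIdeal ≤ maximalIdeal R := le_maximalIdeal (p.toFun ⟨2, by omega⟩).isPrime.ne_top
      exact absurd (show (p.toFun ⟨1, by omega⟩).asIdeal < (p.toFun ⟨2, by omega⟩).asIdeal from h1) (by rw [hm]; exact fun hc => (lt_irrefl _ (lt_of_lt_of_le hc h2)))
  exact_mod_cast hlen

theorem aux_hartogs_local {R : Type*} [CommRing R] [IsLocalRing R] [IsDomain R]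
    [IsNoetherianRing R] [IsIntegrallyClosed R]
    {K : Type*} [Field K] [Algebra R K] [IsFractionRing R K]
    (hdim : 2 ≤ ringKrullDim R) (s : K)
    (H : ∀ q : Ideal R, q.IsPrime → q ≠ maximalIdeal R →
        ∃ a ∉ q, ∃ r : R, algebraMap R K a * s = algebraMap R K r) :
    ∃ r : R, algebraMap R K r = s := by
  classical
  have hnp : ¬ (maximalIdeal R).IsPrincipal := fun h =>
    absurd (hdim.trans (aux_dim_le_one h)) (by decide)
  -- the denominator ideal of an element t : K
  let D : K → Ideal R := fun t =>
    { carrier := {c | ∃ r : R, algebraMap R K c * t = algebraMap R K r}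
      add_mem' := by
        rintro a b ⟨r, hr⟩ ⟨r', hr'⟩
        exact ⟨r + r', by rw [map_add, map_add, add_mul, hr, hr']⟩
      zero_mem' := ⟨0, by simp⟩
      smul_mem' := by
        rintro c a ⟨r, hr⟩
        exact ⟨c * r, by rw [smul_eq_mul, map_mul, map_mul, mul_assoc, hr]⟩ }
  have hDmem : ∀ (t : K) (c : R), c ∈ D t ↔ ∃ r : R, algebraMap R K c * t = algebraMap R K r :=
    fun t c => Iff.rfl
  -- the denominator ideal of s is nonzero
  have hD0 : D s ≠ ⊥ := by
    obtain ⟨⟨r, c⟩, hc⟩ := IsLocalization.surj (nonZeroDivisors R) s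
    have : (c : R) ∈ D s := ⟨r, by rw [mul_comm]; exact hc⟩
    intro hb
    rw [hb, Submodule.mem_bot] at this
    exact nonZeroDivisors.coe_ne_zero c this
  -- if D s is not contained in any nonmaximal prime and not ⊤, its radical is the max ideal
  by_cases htop : D s = ⊤
  · obtain ⟨r, hr⟩ : (1 : R) ∈ D s := htop ▸ Submodule.mem_top
    exact ⟨r, by rw [← hr, map_one, one_mul]⟩
  have hrad : maximalIdeal R ≤ (D s).radical := by
    rw [Ideal.radical_eq_sInf]
    refine le_sInf fun p ⟨hle, hp⟩ => ?_
    rcases eq_or_ne p (maximalIdeal R) with h | h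
    · exact h.ge
    · obtain ⟨a, ha, r, hr⟩ := H p hp h
      exact absurd (hle ⟨r, hr⟩) ha
  obtain ⟨n, hn⟩ : ∃ n, maximalIdeal R ^ n ≤ D s := by
    obtain ⟨n, hn⟩ := Ideal.exists_radical_pow_le_of_fg (D s) (IsNoetherian.noetherian _)
    exact ⟨n, le_trans (Ideal.pow_right_mono hrad _) hn⟩
  clear hrad hD0 htop
  induction n with
  | zero =>
    obtain ⟨r, hr⟩ : (1 : R) ∈ D s := hn (by simp)
    exact ⟨r, by rw [← hr, map_one, one_mul]⟩
  | succ n ih =>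
    by_cases hn' : maximalIdeal R ^ n ≤ D s
    · exact ih hn'
    exfalso
    obtain ⟨c, hcm, hcD⟩ := SetLike.not_le_iff_exists.mp hn'
    set t : K := algebraMap R K c * s with ht
    -- every element of m is in D t
    have hmDt : maximalIdeal R ≤ D t := by
      intro d hd
      have : d * c ∈ D s := hn (by rw [pow_succ, mul_comm d c]; exact Ideal.mul_mem_mul hcm hd)
      obtain ⟨r, hr⟩ := this
      exact ⟨r, by rw [← hr, map_mul]; ring⟩
    set M : Submodule R K := Submodule.map (Algebra.linearMap R K) (maximalIdeal R) with hM
    have hmbot : maximalIdeal R ≠ ⊥ := by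
      intro hb
      exact hnp ⟨0, by rw [hb, Submodule.span_zero_singleton]⟩
    by_cases hx : ∀ y ∈ M, t * y ∈ M
    · -- t is integral over R, hence in R, hence c ∈ D s, contradiction
      have hint : IsIntegral R t := by
        refine isIntegral_of_smul_mem_submodule M ?_ ?_ t hx
        · obtain ⟨a, haM, ha0⟩ := Submodule.exists_mem_ne_zero_of_ne_bot hmbot
          rw [Submodule.ne_bot_iff]
          exact ⟨algebraMap R K a, ⟨a, haM, rfl⟩,
            (IsFractionRing.to_map_eq_zero_iff (K := K)).not.mpr ha0⟩
        · exact Submodule.FG.map _ (IsNoetherian.noetherian _)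
      obtain ⟨r, hr⟩ := IsIntegrallyClosed.isIntegral_iff.mp hint
      exact hcD ⟨r, by rw [← ht]; exact hr.symm⟩
    · push_neg at hx
      obtain ⟨y, hyM, hyn⟩ := hx
      obtain ⟨d, hdm, rfl⟩ := hyM
      obtain ⟨r, hr⟩ : d ∈ D t := hmDt hdm
      have hrm : r ∉ maximalIdeal R := by
        intro hrm
        exact hyn ⟨r, hrm, show algebraMap R K r = t * algebraMap R K d by rw [← hr]; ring⟩
      have hru : IsUnit r := not_not.mp (fun h => hrm h)
      -- m = span {d}
      apply hnp
      refine ⟨d, le_antisymm ?_ ?_⟩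
      · intro e he
        obtain ⟨re, hre⟩ : e ∈ D t := hmDt he
        -- d * re = r * e
        have : algebraMap R K (d * re) = algebraMap R K (r * e) := by
          rw [map_mul, map_mul, ← hre, ← hr]; ring
        have heq : d * re = r * e := IsFractionRing.injective R K this
        obtain ⟨u, hu⟩ := hru.exists_left_inv
        exact Ideal.mem_span_singleton.mpr ⟨u * re, by
          rw [show d * (u * re) = u * (d * re) by ring, heq,
            show u * (r * e) = (u * r) * e by ring, hu, one_mul]⟩
      · exact Ideal.span_le.mpr (Set.singleton_subset_iff.mpr hdm)

theorem aux_bridge (X : Scheme) [IsIntegral X] [IsNoetherian X]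
    (x : X) (hIC : IsIntegrallyClosed (X.presheaf.stalk x))
    (hdim : 2 ≤ ringKrullDim (X.presheaf.stalk x))
    (sK : X.functionField)
    (hgen : ∀ y : X, y ⤳ x → y ≠ x →
      ∃ g : X.presheaf.stalk y, algebraMap (X.presheaf.stalk y) X.functionField g = sK) :
    ∃ g : X.presheaf.stalk x, algebraMap (X.presheaf.stalk x) X.functionField g = sK := by
  classical
  set W : X.Opens := (X.affineCover.f (X.affineCover.idx x)).opensRange with hWdef
  have hW : IsAffineOpen W := isAffineOpen_opensRange _
  have hx : x ∈ W := X.affineCover.covers x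
  haveI : Nonempty W := ⟨⟨x, hx⟩⟩
  haveI hNoethA : IsNoetherianRing Γ(X, W) := IsLocallyNoetherian.component_noetherian ⟨W, hW⟩
  haveI : IsFractionRing Γ(X, W) X.functionField :=
    functionField_isFractionRing_of_isAffineOpen X W hW
  letI : Algebra Γ(X, W) (X.presheaf.stalk x) := X.presheaf.algebra_section_stalk ⟨x, hx⟩
  set P : PrimeSpectrum Γ(X, W) := hW.primeIdealOf ⟨x, hx⟩ with hPdef
  haveI hloc : IsLocalization.AtPrime (X.presheaf.stalk x) P.asIdeal := hW.isLocalization_stalk ⟨x, hx⟩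
  haveI : IsDomain (X.presheaf.stalk x) :=
    IsLocalization.isDomain_of_le_nonZeroDivisors (M := P.asIdeal.primeCompl) _
      P.asIdeal.primeCompl_le_nonZeroDivisors
  haveI : IsNoetherianRing (X.presheaf.stalk x) :=
    IsLocalization.isNoetherianRing P.asIdeal.primeCompl (X.presheaf.stalk x) hNoethA
  haveI : IsScalarTower Γ(X, W) (X.presheaf.stalk x) X.functionField :=
    functionField_isScalarTower X W ⟨x, hx⟩
  apply aux_hartogs_local hdim sK
  intro q hq hqm
  set Q : Ideal Γ(X, W) := Ideal.comap (algebraMap Γ(X, W) (X.presheaf.stalk x)) q with hQdef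
  haveI hQp : Q.IsPrime := Ideal.IsPrime.comap _ (hK := hq)
  have hQP : Q ≤ P.asIdeal := by
    have h1 : q ≤ maximalIdeal (X.presheaf.stalk x) := le_maximalIdeal hq.ne_top
    have h2 : Ideal.comap (algebraMap Γ(X, W) (X.presheaf.stalk x))
        (maximalIdeal (X.presheaf.stalk x)) = P.asIdeal :=
      IsLocalization.AtPrime.comap_maximalIdeal _ _
    rw [← h2]
    exact Ideal.comap_mono h1
  set y : X := hW.fromSpec.base ⟨Q, hQp⟩ with hydef
  have hyW : y ∈ W := by
    have h := Set.mem_range_self (f := hW.fromSpec.base) ⟨Q, hQp⟩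
    rw [hW.range_fromSpec] at h
    exact h
  have hyx : y ⤳ x := by
    have : (⟨Q, hQp⟩ : PrimeSpectrum Γ(X, W)) ⤳ P :=
      (PrimeSpectrum.le_iff_specializes _ _).mp hQP
    have := this.map hW.fromSpec.base.hom.continuous
    rwa [hW.fromSpec_primeIdealOf ⟨x, hx⟩] at this
  have hyne : y ≠ x := by
    intro he
    apply hqm
    have hinj := hW.isOpenImmersion_fromSpec.base_open.injective
    have : (⟨Q, hQp⟩ : PrimeSpectrum Γ(X, W)) = P := by
      apply hinj
      show hW.fromSpec.base ⟨Q, hQp⟩ = hW.fromSpec.base P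
      rw [hPdef, hW.fromSpec_primeIdealOf ⟨x, hx⟩]
      exact he
    have hQeq : Q = P.asIdeal := congrArg PrimeSpectrum.asIdeal this
    -- q and maximalIdeal both comap to P
    have h2 : Ideal.comap (algebraMap Γ(X, W) (X.presheaf.stalk x))
        (maximalIdeal (X.presheaf.stalk x)) = P.asIdeal :=
      IsLocalization.AtPrime.comap_maximalIdeal _ _
    have := (IsLocalization.orderIsoOfPrime P.asIdeal.primeCompl (X.presheaf.stalk x)).injective
      (a₁ := ⟨q, hq⟩) (a₂ := ⟨maximalIdeal (X.presheaf.stalk x), inferInstance⟩) ?_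
    · exact congrArg Subtype.val this
    · apply Subtype.ext
      show Ideal.comap _ q = Ideal.comap _ (maximalIdeal (X.presheaf.stalk x))
      rw [h2, ← hQdef, hQeq]
  obtain ⟨g, hg⟩ := hgen y hyx hyne
  letI : Algebra Γ(X, W) (X.presheaf.stalk y) := X.presheaf.algebra_section_stalk ⟨y, hyW⟩
  haveI hlocy : IsLocalization.AtPrime (X.presheaf.stalk y) Q := by
    have := hW.isLocalization_stalk' ⟨Q, hQp⟩ hyW
    exact this
  haveI : IsScalarTower Γ(X, W) (X.presheaf.stalk y) X.functionField :=
    functionField_isScalarTower X W ⟨y, hyW⟩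
  obtain ⟨⟨r, ⟨a, ha⟩⟩, hmk⟩ := IsLocalization.mk'_surjective Q.primeCompl g
  have hspec : algebraMap Γ(X, W) (X.presheaf.stalk y) a * g = algebraMap Γ(X, W) (X.presheaf.stalk y) r := by
    rw [← hmk, mul_comm]
    exact IsLocalization.mk'_spec _ _ _
  have hK : algebraMap Γ(X, W) X.functionField a * sK = algebraMap Γ(X, W) X.functionField r := by
    have := congrArg (algebraMap (X.presheaf.stalk y) X.functionField) hspec
    rw [map_mul, hg, ← IsScalarTower.algebraMap_apply, ← IsScalarTower.algebraMap_apply] at this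
    exact this
  refine ⟨algebraMap Γ(X, W) (X.presheaf.stalk x) a, ?_, algebraMap Γ(X, W) (X.presheaf.stalk x) r, ?_⟩
  · exact ha
  · rw [← IsScalarTower.algebraMap_apply, ← IsScalarTower.algebraMap_apply]
    exact hK

/-- Algebraic Hartogs: if `X` is an integral normal Noetherian scheme (all stalks are
integrally closed domains) and `U ⊆ X` is open with complement of codimension at least 2
(every point outside `U` has stalk of Krull dimension at least 2), then restriction
`Γ(X, O_X) → Γ(U, O_U)` is bijective. -/
theorem stmt16 (X : Scheme) [IsIntegral X] [IsNoetherian X]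
    (hnormal : ∀ x : X, IsIntegrallyClosed (X.presheaf.stalk x))
    (U : X.Opens)
    (hcodim : ∀ x : X, x ∉ U → 2 ≤ ringKrullDim (X.presheaf.stalk x)) :
    Function.Bijective (X.presheaf.map (homOfLE (le_top : U ≤ ⊤)).op) := by
  classical
  have hgen : genericPoint X ∈ U := by
    by_contra h
    have h2 := hcodim _ h
    have hf : IsField (X.presheaf.stalk (genericPoint X)) :=
      Semifield.toIsField X.functionField
    rw [ringKrullDim_eq_zero_of_isField hf] at h2
    exact absurd h2 (by decide)
  haveI : Nonempty U := ⟨⟨_, hgen⟩⟩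
  constructor
  · exact map_injective_of_isIntegral X (homOfLE le_top)
  intro s
  set η := genericPoint X with hηdef
  set sK : X.functionField := X.presheaf.germ U η hgen s with hsK
  set V : Set X :=
    {z | ∃ g : X.presheaf.stalk z, algebraMap (X.presheaf.stalk z) X.functionField g = sK}
    with hVdef
  have hηW : ∀ (W : X.Opens), (W : Set X).Nonempty → η ∈ W := fun W hW =>
    ((genericPoint_spec X).mem_open_set_iff W.isOpen).mpr (by rw [Set.univ_inter]; exact hW)
  -- sections with the right germ witness membership in V
  have hP_of_sec : ∀ (W : X.Opens) (hη' : η ∈ W) (t : Γ(X, W)),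
      X.presheaf.germ W η hη' t = sK → ∀ z, z ∈ W → z ∈ V := by
    intro W hη' t ht z hz
    refine ⟨X.presheaf.germ W z hz t, ?_⟩
    rw [RingHom.algebraMap_toAlgebra]
    have := TopCat.Presheaf.germ_stalkSpecializes_apply X.presheaf (U := W) (y := z) hz
      ((genericPoint_spec X).specializes trivial) t
    rw [this]
    exact ht
  have hsec_of_P : ∀ z ∈ V, ∃ (W : X.Opens) (hz : z ∈ W) (hη' : η ∈ W) (t : Γ(X, W)),
      X.presheaf.germ W η hη' t = sK := by
    intro z hzV
    obtain ⟨g, hg⟩ := hzV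
    obtain ⟨W, hzW, t, rfl⟩ := TopCat.Presheaf.germ_exist (x := z) X.presheaf g
    have hη' : η ∈ W := hηW W ⟨z, hzW⟩
    refine ⟨W, hzW, hη', t, ?_⟩
    rw [RingHom.algebraMap_toAlgebra] at hg
    have := TopCat.Presheaf.germ_stalkSpecializes_apply X.presheaf (U := W) (y := z) hzW
      ((genericPoint_spec X).specializes trivial) t
    rw [this] at hg
    exact hg
  have hVopen : IsOpen V := by
    rw [isOpen_iff_forall_mem_open]
    intro z hz
    obtain ⟨W, hzW, hη', t, ht⟩ := hsec_of_P z hz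
    exact ⟨W, fun w hw => hP_of_sec W hη' t ht w hw, W.isOpen, hzW⟩
  have hUV : (U : Set X) ⊆ V := fun z hz => hP_of_sec U hgen s rfl z hz
  have hVuniv : V = Set.univ := by
    by_contra hne
    have hCne : Vᶜ.Nonempty := Set.nonempty_compl.mpr hne
    have hCcl : IsClosed Vᶜ := hVopen.isClosed_compl
    obtain ⟨S, hSfin, hScl, hSirr, hSdec⟩ :=
      TopologicalSpace.NoetherianSpace.exists_finite_set_isClosed_irreducible hCcl
    have hSne : S.Nonempty := by
      rcases Set.eq_empty_or_nonempty S with h | h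
      · rw [h] at hSdec
        simp at hSdec
        exact absurd hSdec hne
      · exact h
    obtain ⟨Z, hZS, hZmax⟩ := Set.Finite.exists_maximalFor id S hSfin hSne
    have hZirr := hSirr Z hZS
    have hZcl := hScl Z hZS
    set x := hZirr.genericPoint with hxdef
    have hxspec : IsGenericPoint x Z := hZirr.isGenericPoint_genericPoint hZcl
    have hZC : Z ⊆ Vᶜ := by rw [hSdec]; exact Set.subset_sUnion_of_mem hZS
    have hxC : x ∈ Vᶜ := hZC hxspec.mem
    have hxU : x ∉ U := fun h => hxC (hUV h)
    have hprop : ∀ y : X, y ⤳ x → y ≠ x → y ∈ V := by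
      intro y hyx hyne
      by_contra hyV
      have hclo : closure {y} ⊆ Vᶜ := hCcl.closure_subset_iff.mpr (Set.singleton_subset_iff.mpr hyV)
      obtain ⟨Z', hZ'S, hZ'sub⟩ := (isIrreducible_iff_sUnion_isClosed.mp
        (isIrreducible_singleton.closure)) hSfin.toFinset
        (fun z hz => hScl z (hSfin.mem_toFinset.mp hz))
        (by rw [Set.Finite.coe_toFinset, ← hSdec]; exact hclo)
      have hZ'S' : Z' ∈ S := hSfin.mem_toFinset.mp hZ'S
      have hxy : closure ({x} : Set X) ⊆ closure ({y} : Set X) :=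
        closure_minimal (Set.singleton_subset_iff.mpr hyx.mem_closure) isClosed_closure
      have hZZ' : Z ⊆ Z' := by
        calc Z = closure {x} := hxspec.symm
        _ ⊆ closure {y} := hxy
        _ ⊆ Z' := hZ'sub
      have hZeq : Z = Z' := le_antisymm hZZ' (hZmax hZ'S' hZZ')
      have hcyZ : closure ({y} : Set X) = Z := by
        apply le_antisymm
        · rw [hZeq]; exact hZ'sub
        · rw [← hxspec]; exact hxy
      have : y = x := by
        have h1 : x ⤳ y := by
          have : y ∈ closure ({x} : Set X) := by
            rw [hxspec]; rw [← hcyZ]; exact subset_closure rfl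
          exact specializes_iff_mem_closure.mpr this
        exact (hyx.antisymm h1).eq
      exact hyne this
    have := aux_bridge X x (hnormal x) (hcodim x hxU) sK hprop
    exact hxC this
  -- gluing
  have hall : ∀ z : X, ∃ (W : X.Opens) (hz : z ∈ W) (hη' : η ∈ W) (t : Γ(X, W)),
      X.presheaf.germ W η hη' t = sK := fun z => hsec_of_P z (hVuniv ▸ Set.mem_univ z)
  choose W hmem hη' t ht using hall
  have hcover : (⊤ : X.Opens) ≤ iSup W := fun z _ => Opens.mem_iSup.mpr ⟨z, hmem z⟩
  have hcompat : TopCat.Presheaf.IsCompatible X.sheaf.1 W t := by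
    intro i j
    apply germ_injective_of_isIntegral X (U := W i ⊓ W j) η (show η ∈ W i ⊓ W j from ⟨hη' i, hη' j⟩)
    show X.presheaf.germ (W i ⊓ W j) η (show η ∈ W i ⊓ W j from ⟨hη' i, hη' j⟩)
        (X.presheaf.map (Opens.infLELeft (W i) (W j)).op (t i)) =
      X.presheaf.germ (W i ⊓ W j) η (show η ∈ W i ⊓ W j from ⟨hη' i, hη' j⟩)
        (X.presheaf.map (Opens.infLERight (W i) (W j)).op (t j))
    rw [TopCat.Presheaf.germ_res_apply, TopCat.Presheaf.germ_res_apply]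
    rw [ht i, ht j]
  obtain ⟨tt, htt, -⟩ := X.sheaf.existsUnique_gluing' W ⊤ (fun i => homOfLE le_top) hcover t hcompat
  refine ⟨tt, ?_⟩
  apply germ_injective_of_isIntegral X (U := U) η hgen
  erw [TopCat.Presheaf.germ_res_apply]
  have h1 : X.presheaf.germ (W η) η (hmem η)
      (X.presheaf.map (homOfLE (le_top : W η ≤ ⊤)).op tt) = sK := by
    rw [show X.presheaf.map (homOfLE (le_top : W η ≤ ⊤)).op tt
        = X.sheaf.1.map (homOfLE (le_top : W η ≤ ⊤)).op tt from rfl, htt η]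
    exact ht η
  erw [TopCat.Presheaf.germ_res_apply] at h1
  exact h1.trans hsK
end
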